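/- arXiv:1712.10163 — 4 statements merged into one kernel-verified Lean document; each statement's English description precedes it below -/
import Mathlib

section
/- The elementary symmetric polynomials e₂(z₁,…,z_K), e₃(z₁,…,z_K), …, e_K(z₁,…,z_K), viewed as polynomials in the variables z₁,…,z_{K−1} after substituting z_K = −(z₁ + ⋯ + z_{K−1}), are algebraically independent over ℝ. -/
/-!
On the hyperplane `z₁ + ⋯ + z_K = 0` the polynomial `e₁` vanishes, so each `zᵢ` is a root of the
monic polynomial `∏ⱼ (T - zⱼ) = T^K + ∑_{k ≥ 2} (-1)^k e_k T^(K-k)`, whose coefficients lie in the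
algebra generated by `e₂, …, e_K`. Hence the polynomial ring in `z₁, …, z_{K-1}` is integral over
that algebra, whose `K - 1` generators must then be a transcendence basis, since the ring has
transcendence degree `K - 1`.
-/

open Polynomial in
theorem Multiset.isIntegral_of_mem_of_esymm_mem {A B : Type*} [CommRing A] [CommRing B]
    [Algebra B A] {s : Multiset A} (hs : ∀ k ≤ card s, s.esymm k ∈ Set.range (algebraMap B A))
    {a : A} (ha : a ∈ s) : IsIntegral B a := by
  nontriviality A
  set p := (s.map fun t => X - C t).prod
  have hmonic : p.Monic := monic_multiset_prod_of_monic _ _ fun t _ => monic_X_sub_C t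
  have hlifts : p ∈ lifts (algebraMap B A) := by
    refine (lifts_iff_coeff_lifts p).2 fun k => ?_
    rcases le_or_gt k (card s) with hk | hk
    · obtain ⟨b, hb⟩ := hs _ (Nat.sub_le _ k)
      exact ⟨(-1) ^ (card s - k) * b, by simp [p, prod_X_sub_C_coeff s hk, hb]⟩
    · rw [coeff_eq_zero_of_natDegree_lt (by rwa [natDegree_multiset_prod_X_sub_C_eq_card])]
      exact ⟨0, (algebraMap B A).map_zero⟩
  obtain ⟨q, hq, -, hq_monic⟩ := lifts_and_natDegree_eq_and_monic hlifts hmonic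
  refine ⟨q, hq_monic, ?_⟩
  rw [eval₂_eq_eval_map, hq, eval_multiset_prod]
  exact prod_eq_zero (mem_map.2 ⟨_, mem_map_of_mem _ ha, by simp⟩)

theorem Algebra.isIntegral_of_adjoin_eq_top {R A : Type*} [CommRing R] [CommRing A] [Algebra R A]
    (S : Subalgebra R A) {s : Set A} (hs : Algebra.adjoin R s = ⊤)
    (hint : ∀ x ∈ s, IsIntegral S x) : Algebra.IsIntegral S A := by
  rw [← integralClosure_eq_top_iff, eq_top_iff]
  have hle : Algebra.adjoin R s ≤ (integralClosure S A).restrictScalars R := Algebra.adjoin_le hint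
  exact fun x => hle (hs ▸ Algebra.mem_top)

namespace MvPolynomial

variable (R : Type*) [CommRing R] (n : ℕ)

noncomputable def zeroSumSubst : Fin (n + 1) → MvPolynomial (Fin n) R := fun i =>
  if h : (i : ℕ) < n then X ⟨i, h⟩ else -∑ j, X j

variable {R n}

@[simp]
lemma zeroSumSubst_castSucc (i : Fin n) : zeroSumSubst R n i.castSucc = X i := by
  simp [zeroSumSubst]

lemma sum_zeroSumSubst : ∑ i, zeroSumSubst R n i = 0 := by
  simp [Fin.sum_univ_castSucc, zeroSumSubst]

lemma aeval_zeroSumSubst_esymm_mem_adjoin {k : ℕ} (hk : k ≤ n + 1) :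
    aeval (zeroSumSubst R n) (esymm (Fin (n + 1)) R k) ∈ Algebra.adjoin R
      (Set.range fun j : Fin n => aeval (zeroSumSubst R n) (esymm (Fin (n + 1)) R (j + 2))) := by
  match k, hk with
  | 0, _ => simp [esymm_zero]
  | 1, _ => simp [esymm_one, sum_zeroSumSubst]
  | j + 2, hj => exact Algebra.subset_adjoin ⟨⟨j, by omega⟩, rfl⟩

theorem algebraicIndependent_aeval_zeroSumSubst_esymm [IsDomain R] :
    AlgebraicIndependent R fun k : Fin n =>
      aeval (zeroSumSubst R n) (esymm (Fin (n + 1)) R (k + 2)) := by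
  set S := Algebra.adjoin R (Set.range fun k : Fin n =>
      aeval (zeroSumSubst R n) (esymm (Fin (n + 1)) R (k + 2)))
  have hint : Algebra.IsIntegral S (MvPolynomial (Fin n) R) := by
    refine Algebra.isIntegral_of_adjoin_eq_top S adjoin_range_X ?_
    rintro _ ⟨i, rfl⟩
    rw [← zeroSumSubst_castSucc]
    refine Multiset.isIntegral_of_mem_of_esymm_mem (fun k hk => ?_)
      (Multiset.mem_map_of_mem (zeroSumSubst R n) (Finset.mem_univ_val i.castSucc))
    simp only [Multiset.card_map, Finset.card_val, Finset.card_univ, Fintype.card_fin] at hk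
    rw [← aeval_esymm_eq_multiset_esymm (Fin (n + 1)) R]
    exact ⟨⟨_, aeval_zeroSumSubst_esymm_mem_adjoin hk⟩, rfl⟩
  refine (Algebra.IsAlgebraic.isTranscendenceBasis_of_lift_le_trdeg_of_finite R _ ?_).1
  simp [trdeg_of_isDomain]

end MvPolynomial

/-- **Elementary symmetric polynomials remain independent on the zero-sum
hyperplane.**  With `K = n + 1` variables `z₁, …, z_K`, substitute
`z_K = −(z₁ + ⋯ + z_{K−1})`.  Then the polynomials
`e₂(z₁, …, z_K), …, e_K(z₁, …, z_K)`, viewed as polynomials in `z₁, …, z_{K−1}`,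
are algebraically independent over `ℝ`. -/
theorem esymm_algebraicIndependent_on_zero_sum (n : ℕ) :
    AlgebraicIndependent ℝ (fun k : Fin n =>
      MvPolynomial.aeval
        (fun i : Fin (n + 1) =>
          (if h : (i : ℕ) < n then MvPolynomial.X (⟨(i : ℕ), h⟩ : Fin n)
           else - ∑ j : Fin n, MvPolynomial.X j : MvPolynomial (Fin n) ℝ))
        (MvPolynomial.esymm (Fin (n + 1)) ℝ ((k : ℕ) + 2))) :=
  MvPolynomial.algebraicIndependent_aeval_zeroSumSubst_esymm
end

section
/- Let f₁,…,f_r ∈ ℝ[x₁,…,x_p] be algebraically independent polynomials, and let e₁,…,e_K be the elementary symmetric polynomials in K variables. Then the rK polynomials e_k(f_i(x^{(1)}),…,f_i(x^{(K)})) for 1 ≤ i ≤ r, 1 ≤ k ≤ K, in the variables x^{(1)},…,x^{(K)} (K disjoint copies of the variables x), are algebraically independent over ℝ. -/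
/-!
Independent families in disjoint sets of variables are jointly independent: under
`R[σ ⊕ τ] ≃ R[σ] ⊗[R] R[τ]` their joint `aeval` becomes the tensor product of the two injective
`aeval` maps, which stays injective because polynomial rings are free, hence flat. So the
`rK` polynomials `f_i(x⁽ʲ⁾)` are independent, and so are the `r` disjoint copies of
`e₁, …, e_K` (fundamental theorem of symmetric polynomials). Substituting the first family into
the second preserves independence and gives exactly the polynomials `e_k(f_i(x⁽¹⁾), …, f_i(x⁽ᴷ⁾))`.
-/

open MvPolynomial TensorProduct

def finSuccProdEquiv (K : ℕ) (α : Type*) : Fin (K + 1) × α ≃ α ⊕ Fin K × α :=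
  ((finSuccEquiv K).prodCongr (Equiv.refl α)).trans optionProdEquiv

section

variable {R : Type*} [CommRing R] {σ τ ι ι' : Type*}

namespace MvPolynomial

theorem tensorEquivSum_tmul_one (p : MvPolynomial σ R) :
    tensorEquivSum R σ τ R (p ⊗ₜ 1) = rename Sum.inl p := by
  have : (tensorEquivSum R σ τ R).toAlgHom.comp Algebra.TensorProduct.includeLeft =
      rename Sum.inl := by
    ext i; simp
  exact AlgHom.congr_fun this p

theorem tensorEquivSum_one_tmul (p : MvPolynomial τ R) :
    tensorEquivSum R σ τ R (1 ⊗ₜ p) = rename Sum.inr p := by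
  have : (tensorEquivSum R σ τ R).toAlgHom.comp Algebra.TensorProduct.includeRight =
      rename Sum.inr := by
    ext i; simp
  exact AlgHom.congr_fun this p

theorem aeval_sumElim_rename_comp_tensorEquivSum
    (v : ι → MvPolynomial σ R) (w : ι' → MvPolynomial τ R) :
    (aeval (Sum.elim (rename Sum.inl ∘ v) (rename Sum.inr ∘ w))).comp
        (tensorEquivSum R ι ι' R).toAlgHom =
      (tensorEquivSum R σ τ R).toAlgHom.comp (Algebra.TensorProduct.map (aeval v) (aeval w)) := by
  apply Algebra.TensorProduct.ext <;> apply algHom_ext <;> intro i <;>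
    simp [tensorEquivSum_tmul_one, tensorEquivSum_one_tmul]

theorem algebraicIndependent_esymm (σ : Type*) [Fintype σ] {n : ℕ}
    (hn : n ≤ Fintype.card σ) :
    AlgebraicIndependent R (fun k : Fin n => esymm σ R (k + 1)) := by
  rw [AlgebraicIndependent]
  convert Subtype.val_injective.comp (esymmAlgHom_injective R hn) using 1
  ext p : 1
  exact (esymmAlgHom_apply p).symm

end MvPolynomial

theorem AlgebraicIndependent.sumElim_rename
    {v : ι → MvPolynomial σ R} {w : ι' → MvPolynomial τ R}
    (hv : AlgebraicIndependent R v) (hw : AlgebraicIndependent R w) :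
    AlgebraicIndependent R (Sum.elim (rename Sum.inl ∘ v) (rename Sum.inr ∘ w)) := by
  have hmap : Function.Injective (Algebra.TensorProduct.map (aeval v) (aeval w)) :=
    TensorProduct.map_injective_of_flat_flat _ _ hv hw
  have hcomm := congrArg DFunLike.coe (aeval_sumElim_rename_comp_tensorEquivSum (R := R) v w)
  simp only [AlgHom.coe_comp, AlgEquiv.coe_toAlgHom] at hcomm
  rw [AlgebraicIndependent,
    ← Function.Injective.of_comp_iff' _ (tensorEquivSum R ι ι' R).bijective, hcomm]
  exact (tensorEquivSum R σ τ R).injective.comp hmap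

theorem AlgebraicIndependent.rename_prodMk (K : ℕ)
    {v : ι → MvPolynomial σ R} (hv : AlgebraicIndependent R v) :
    AlgebraicIndependent R (fun ji : Fin K × ι => rename (Prod.mk ji.1) (v ji.2)) := by
  induction K with
  | zero => exact algebraicIndependent_empty_type_iff.mpr (C_injective _ _)
  | succ K ih =>
    have h := ((hv.sumElim_rename ih).map'
      (rename_injective _ (finSuccProdEquiv K σ).symm.injective)).comp
      (finSuccProdEquiv K ι) (finSuccProdEquiv K ι).injective
    convert h using 1
    ext ⟨j, i⟩ : 1
    cases j using Fin.cases <;> simp [finSuccProdEquiv, rename_rename, Function.comp_def]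

end

/-- **Symmetrized copies of independent polynomials are independent.**
Let `f₁, …, f_r ∈ ℝ[x₁, …, x_p]` be algebraically independent, and let
`e₁, …, e_K` be the elementary symmetric polynomials in `K` variables.  Then
the `rK` polynomials `e_k(f_i(x⁽¹⁾), …, f_i(x⁽ᴷ⁾))`, `1 ≤ i ≤ r`, `1 ≤ k ≤ K`,
in `K` disjoint blocks of variables, are algebraically independent over `ℝ`. -/
theorem esymm_of_independent_blocks_algebraicIndependent {p r K : ℕ}
    (f : Fin r → MvPolynomial (Fin p) ℝ)
    (hf : AlgebraicIndependent ℝ f) :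
    AlgebraicIndependent ℝ (fun ik : Fin r × Fin K =>
      MvPolynomial.aeval
        (fun j : Fin K =>
          MvPolynomial.rename (fun a : Fin p => (j, a)) (f ik.1))
        (MvPolynomial.esymm (Fin K) ℝ ((ik.2 : ℕ) + 1))) := by
  have hblocks : AlgebraicIndependent ℝ
      (fun ik : Fin r × Fin K => rename (Prod.mk ik.2) (f ik.1)) :=
    (hf.rename_prodMk K).comp Prod.swap Prod.swap_injective
  have hesymm : AlgebraicIndependent ℝ
      (fun ik : Fin r × Fin K => rename (Prod.mk ik.1) (esymm (Fin K) ℝ (ik.2 + 1))) :=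
    (algebraicIndependent_esymm (Fin K) (Fintype.card_fin K).ge).rename_prodMk r
  convert hblocks.aeval_of_algebraicIndependent hesymm using 2 with ik
  rw [aeval_rename]
  rfl
end

section
/- Let G be a finite abelian group and let Ĝ be its character group. Let H = (ℤ/p)^Ĝ with p = |G| act on the rational function field ℂ(y_χ : χ ∈ Ĝ) by scaling each y_χ by p-th roots of unity. Suppose φ ∈ H, written as (φ_χ)_{χ∈Ĝ} with each φ_χ a p-th root of unity, fixes all products y_χ y_{χ⁻¹} and all products y_{χ₁} y_{χ₂} y_{(χ₁χ₂)⁻¹}. Then the map χ ↦ φ_χ is a group homomorphism Ĝ → ℂ^×; consequently the subgroup of H fixing these invariants has order exactly |G|. -/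
open MvPolynomial

/-- The action of a tuple of scalars `φ = (φ_χ)` (indexed by the characters of `G`)
on the polynomial ring `ℂ[y_χ : χ ∈ Ĝ]`, scaling each variable: `y_χ ↦ φ_χ · y_χ`. -/
noncomputable def scaleVars {G : Type*} [Group G]
    (φ : (G →* ℂˣ) → ℂˣ) (f : MvPolynomial (G →* ℂˣ) ℂ) : MvPolynomial (G →* ℂˣ) ℂ :=
  MvPolynomial.aeval (fun χ : G →* ℂˣ => ((φ χ : ℂ)) • MvPolynomial.X χ) f

/-!
A scaling fixes a monomial `y_{χ₁} ⋯ y_{χₖ}` exactly when `φ_{χ₁} ⋯ φ_{χₖ} = 1`. So fixing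
`y_χ y_{χ⁻¹}` says `φ_{χ⁻¹} = φ_χ⁻¹`, and then fixing `y_{χ₁} y_{χ₂} y_{(χ₁χ₂)⁻¹}` says
`φ_{χ₁} φ_{χ₂} = φ_{χ₁χ₂}`: the invariant scalings are precisely the homomorphisms `Ĝ → ℂˣ`,
and by Pontryagin duality for finite abelian groups there are `|Ĝ| = |G|` of them.
-/

theorem smul_eq_self_iff_of_ne_zero {R M : Type*} [Ring R] [IsCancelMulZero R] [AddCommGroup M]
    [Module R M] [Module.IsTorsionFree R M] {m : M} (hm : m ≠ 0) {r : R} :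
    r • m = m ↔ r = 1 := by
  simpa using (smul_left_injective R hm).eq_iff (a := r) (b := 1)

theorem forall_map_mul_iff {A B : Type*} [Group A] [Group B] (f : A → B) :
    (∀ a b, f (a * b) = f a * f b) ↔
      (∀ a, f a * f a⁻¹ = 1) ∧ ∀ a b, f a * f b * f (a * b)⁻¹ = 1 := by
  constructor
  · intro hf
    have hf1 : f 1 = 1 := (MonoidHom.mk' f hf).map_one
    exact ⟨fun a => by rw [← hf, mul_inv_cancel, hf1],
      fun a b => by rw [← hf, ← hf, mul_inv_cancel, hf1]⟩
  · rintro ⟨hinv, hprod⟩ a b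
    rw [eq_inv_of_mul_eq_one_left (hinv (a * b)), eq_inv_of_mul_eq_one_left (hprod a b)]

theorem MonoidHom.pow_card_eq_one {G M : Type*} [Group G] [Fintype G] [CommMonoid M]
    (χ : G →* M) : χ ^ Fintype.card G = 1 := by
  ext g
  rw [MonoidHom.pow_apply, ← map_pow, _root_.pow_card_eq_one, map_one, MonoidHom.one_apply]

theorem card_monoidHom_units_complex (G : Type*) [CommGroup G] [Finite G] :
    Nat.card (G →* ℂˣ) = Nat.card G := by
  have : NeZero (Monoid.exponent G : ℂ) := ⟨by exact_mod_cast Monoid.exponent_ne_zero_of_finite⟩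
  exact CommGroup.card_monoidHom_of_hasEnoughRootsOfUnity G ℂ

section scaleVars

variable {G : Type*} [Group G] (ψ : (G →* ℂˣ) → ℂˣ)

theorem scaleVars_X_mul_X_eq_self_iff (a b : G →* ℂˣ) :
    scaleVars ψ (X a * X b) = X a * X b ↔ ψ a * ψ b = 1 := by
  rw [scaleVars, map_mul, aeval_X, aeval_X, smul_mul_smul_comm,
    smul_eq_self_iff_of_ne_zero (mul_ne_zero (X_ne_zero a) (X_ne_zero b)), Units.ext_iff]
  simp

theorem scaleVars_X_mul_X_mul_X_eq_self_iff (a b c : G →* ℂˣ) :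
    scaleVars ψ (X a * X b * X c) = X a * X b * X c ↔ ψ a * ψ b * ψ c = 1 := by
  rw [scaleVars, map_mul, map_mul, aeval_X, aeval_X, aeval_X, smul_mul_smul_comm,
    smul_mul_smul_comm, smul_eq_self_iff_of_ne_zero
      (mul_ne_zero (mul_ne_zero (X_ne_zero a) (X_ne_zero b)) (X_ne_zero c)), Units.ext_iff]
  simp

def FixesInvariants : Prop :=
  (∀ χ : G →* ℂˣ, scaleVars ψ (X χ * X χ⁻¹) = X χ * X χ⁻¹) ∧
    ∀ χ₁ χ₂ : G →* ℂˣ,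
      scaleVars ψ (X χ₁ * X χ₂ * X (χ₁ * χ₂)⁻¹) = X χ₁ * X χ₂ * X (χ₁ * χ₂)⁻¹

theorem fixesInvariants_iff_forall_map_mul :
    FixesInvariants ψ ↔ ∀ χ₁ χ₂, ψ (χ₁ * χ₂) = ψ χ₁ * ψ χ₂ := by
  simp only [FixesInvariants, scaleVars_X_mul_X_eq_self_iff,
    scaleVars_X_mul_X_mul_X_eq_self_iff]
  exact (forall_map_mul_iff ψ).symm

end scaleVars

noncomputable def invariantScalingsEquivBidual (G : Type*) [CommGroup G] [Fintype G] :
    {ψ : (G →* ℂˣ) → ℂˣ // (∀ χ, ψ χ ^ Fintype.card G = 1) ∧ FixesInvariants ψ} ≃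
      ((G →* ℂˣ) →* ℂˣ) where
  toFun ψ := MonoidHom.mk' ψ.1 ((fixesInvariants_iff_forall_map_mul ψ.1).1 ψ.2.2)
  invFun f := ⟨f, fun χ => by rw [← map_pow, χ.pow_card_eq_one, map_one],
    (fixesInvariants_iff_forall_map_mul f).2 (map_mul f)⟩
  left_inv _ := rfl
  right_inv _ := rfl

theorem fixing_invariants_is_dual_group_general {G : Type*} [CommGroup G] [Fintype G]
    (φ : (G →* ℂˣ) → ℂˣ)
    (hfix2 : ∀ χ : G →* ℂˣ,
      scaleVars φ (MvPolynomial.X χ * MvPolynomial.X χ⁻¹) =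
        MvPolynomial.X χ * MvPolynomial.X χ⁻¹)
    (hfix3 : ∀ χ₁ χ₂ : G →* ℂˣ,
      scaleVars φ (MvPolynomial.X χ₁ * MvPolynomial.X χ₂ * MvPolynomial.X (χ₁ * χ₂)⁻¹) =
        MvPolynomial.X χ₁ * MvPolynomial.X χ₂ * MvPolynomial.X (χ₁ * χ₂)⁻¹) :
    (∀ χ₁ χ₂ : G →* ℂˣ, φ (χ₁ * χ₂) = φ χ₁ * φ χ₂) ∧
    Nat.card {ψ : (G →* ℂˣ) → ℂˣ //
      (∀ χ : G →* ℂˣ, ψ χ ^ Fintype.card G = 1) ∧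
      (∀ χ : G →* ℂˣ,
        scaleVars ψ (MvPolynomial.X χ * MvPolynomial.X χ⁻¹) =
          MvPolynomial.X χ * MvPolynomial.X χ⁻¹) ∧
      (∀ χ₁ χ₂ : G →* ℂˣ,
        scaleVars ψ (MvPolynomial.X χ₁ * MvPolynomial.X χ₂ * MvPolynomial.X (χ₁ * χ₂)⁻¹) =
          MvPolynomial.X χ₁ * MvPolynomial.X χ₂ * MvPolynomial.X (χ₁ * χ₂)⁻¹)} =
      Fintype.card G := by
  refine ⟨(fixesInvariants_iff_forall_map_mul φ).1 ⟨hfix2, hfix3⟩, ?_⟩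
  refine (Nat.card_congr (invariantScalingsEquivBidual G)).trans ?_
  rw [card_monoidHom_units_complex, card_monoidHom_units_complex, Nat.card_eq_fintype_card]

/-- **Automorphisms fixing the degree-2 and degree-3 invariants form the dual group.**
Let `G` be a finite abelian group of order `p` with character group `Ĝ`, and let
`φ ∈ (ℤ/p)^Ĝ` (i.e. each `φ_χ` is a `p`-th root of unity) act on `ℂ(y_χ : χ ∈ Ĝ)`
by scaling variables.  If `φ` fixes all products `y_χ y_{χ⁻¹}` and all products
`y_{χ₁} y_{χ₂} y_{(χ₁χ₂)⁻¹}`, then `χ ↦ φ_χ` is a group homomorphism `Ĝ → ℂˣ`;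
consequently the subgroup of such `φ` has order exactly `|G|`. -/
theorem fixing_invariants_is_dual_group {G : Type*} [CommGroup G] [Fintype G]
    (φ : (G →* ℂˣ) → ℂˣ)
    (hroot : ∀ χ : G →* ℂˣ, φ χ ^ Fintype.card G = 1)
    (hfix2 : ∀ χ : G →* ℂˣ,
      scaleVars φ (MvPolynomial.X χ * MvPolynomial.X χ⁻¹) =
        MvPolynomial.X χ * MvPolynomial.X χ⁻¹)
    (hfix3 : ∀ χ₁ χ₂ : G →* ℂˣ,
      scaleVars φ (MvPolynomial.X χ₁ * MvPolynomial.X χ₂ * MvPolynomial.X (χ₁ * χ₂)⁻¹) =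
        MvPolynomial.X χ₁ * MvPolynomial.X χ₂ * MvPolynomial.X (χ₁ * χ₂)⁻¹) :
    (∀ χ₁ χ₂ : G →* ℂˣ, φ (χ₁ * χ₂) = φ χ₁ * φ χ₂) ∧
    Nat.card {ψ : (G →* ℂˣ) → ℂˣ //
      (∀ χ : G →* ℂˣ, ψ χ ^ Fintype.card G = 1) ∧
      (∀ χ : G →* ℂˣ,
        scaleVars ψ (MvPolynomial.X χ * MvPolynomial.X χ⁻¹) =
          MvPolynomial.X χ * MvPolynomial.X χ⁻¹) ∧
      (∀ χ₁ χ₂ : G →* ℂˣ,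
        scaleVars ψ (MvPolynomial.X χ₁ * MvPolynomial.X χ₂ * MvPolynomial.X (χ₁ * χ₂)⁻¹) =
          MvPolynomial.X χ₁ * MvPolynomial.X χ₂ * MvPolynomial.X (χ₁ * χ₂)⁻¹)} =
      Fintype.card G :=
  fixing_invariants_is_dual_group_general φ hfix2 hfix3
end

section
/- Let G be a finite group of order r acting linearly on V = ℝ^p and let θ ∈ V be such that the vectors {g·θ : g ∈ G} are linearly independent. Then the symmetric third-order tensor T₃(θ) = (1/r) ∑_{g∈G} (g·θ)^{⊗3} determines the orbit of θ uniquely: if θ' ∈ V also has linearly independent orbit vectors and T₃(θ') = T₃(θ), then θ' = g·θ for some g ∈ G. -/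
/-!
Let `a`, `b` be linearly independent families with the same third moment, and `a'`, `b'` dual
families of functionals. Contracting the moment with `a' u` in two slots gives
`a u = ∑ k, a' u (b k) ^ 2 • b k`, and symmetrically `b j = ∑ i, b' j (a i) ^ 2 • a i`.
Applying `b' j`, resp. `a' u`, to these shows that `c u := b' j (a u)` is a square with
`c u = c u ^ 4`, so `c u ∈ {0, 1}`; applying `b' j` to the expansion of `b j` gives
`∑ u, c u = 1`. Hence `c` is the indicator of a single index `u`, and `b j = a u`.
-/

open Finset Module

section

variable {K V ι κ : Type*} [Field K] [AddCommGroup V] [Module K V]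

theorem LinearIndependent.exists_dual_family [DecidableEq ι] {a : ι → V}
    (ha : LinearIndependent K a) :
    ∃ a' : ι → Dual K V, ∀ u i, a' u (a i) = if i = u then 1 else 0 := by
  choose a' ha' using fun u => LinearMap.exists_extend ((Basis.span ha).coord u)
  refine ⟨a', fun u i => ?_⟩
  have hai : a i = (Submodule.subtype _) (Basis.span ha i) := by simp [Basis.span_apply]
  rw [hai, ← LinearMap.comp_apply, ha' u, Basis.coord_apply, Basis.repr_self,
    Finsupp.single_apply]

variable (K) in
/-- The tensor `∑ i, a i ⊗ a i ⊗ a i`, encoded by its values on triples of functionals. -/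
def thirdMoment [Fintype ι] (a : ι → V) (f g h : Dual K V) : K :=
  ∑ i, f (a i) * g (a i) * h (a i)

theorem eq_sum_sq_smul_of_thirdMoment_eq [Fintype ι] [Fintype κ] [DecidableEq ι]
    {a : ι → V} {b : κ → V} (H : thirdMoment K a = thirdMoment K b) {a' : ι → Dual K V}
    (ha' : ∀ u i, a' u (a i) = if i = u then 1 else 0) (u : ι) :
    a u = ∑ k, a' u (b k) ^ 2 • b k := by
  rw [← sub_eq_zero, ← forall_dual_apply_eq_zero_iff K]
  intro h
  have hH := congrFun (congrFun (congrFun H (a' u)) (a' u)) h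
  simp [thirdMoment, ha'] at hH
  simp [hH, sq]

end

section

variable {K V ι κ : Type*} [Field K] [LinearOrder K] [IsStrictOrderedRing K]

theorem eq_zero_or_eq_one_of_eq_pow_four {x : K} (hx : 0 ≤ x) (h : x = x ^ 4) :
    x = 0 ∨ x = 1 := by
  have hx3 : x * (x ^ 3 - 1) = 0 := by linear_combination -h
  rcases mul_eq_zero.1 hx3 with h0 | h1
  · exact .inl h0
  · exact .inr ((pow_eq_one_iff_of_nonneg hx (by norm_num)).1 (sub_eq_zero.1 h1))

theorem exists_eq_single_of_sum_eq_one [Fintype ι] [DecidableEq ι] {c : ι → K}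
    (hc : ∀ i, c i = 0 ∨ c i = 1) (hsum : ∑ i, c i = 1) : ∃ u, c = Pi.single u 1 := by
  obtain ⟨u, -, hu⟩ := exists_ne_zero_of_sum_ne_zero (hsum ▸ one_ne_zero : ∑ i, c i ≠ 0)
  have hcu : c u = 1 := (hc u).resolve_left hu
  have hnonneg : ∀ i, 0 ≤ c i := fun i => by rcases hc i with h | h <;> simp [h]
  have hrest : ∑ i ∈ univ.erase u, c i = 0 := by
    linarith [add_sum_erase univ c (mem_univ u)]
  rw [sum_eq_zero_iff_of_nonneg fun i _ => hnonneg i] at hrest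
  refine ⟨u, funext fun i => ?_⟩
  by_cases hi : i = u
  · simp [hi, hcu]
  · simp [hi, hrest i (mem_erase.2 ⟨hi, mem_univ i⟩)]

variable [AddCommGroup V] [Module K V]

theorem exists_eq_of_thirdMoment_eq [Fintype ι] [Fintype κ] {a : ι → V} {b : κ → V}
    (ha : LinearIndependent K a) (hb : LinearIndependent K b)
    (H : thirdMoment K a = thirdMoment K b) (j : κ) : ∃ u, a u = b j := by
  classical
  obtain ⟨a', ha'⟩ := ha.exists_dual_family
  obtain ⟨b', hb'⟩ := hb.exists_dual_family
  set c : ι → K := fun i => b' j (a i) with hc_def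
  have hbj : b j = ∑ i, c i ^ 2 • a i := eq_sum_sq_smul_of_thirdMoment_eq H.symm hb' j
  have hc_eq_sq : ∀ u, c u = a' u (b j) ^ 2 := fun u => by
    simp [hc_def, eq_sum_sq_smul_of_thirdMoment_eq H ha' u, hb']
  have hsq_eq_c : ∀ u, a' u (b j) = c u ^ 2 := fun u => by
    simp [hbj, ha']
  have hc01 : ∀ u, c u = 0 ∨ c u = 1 := fun u =>
    eq_zero_or_eq_one_of_eq_pow_four (hc_eq_sq u ▸ sq_nonneg _)
      ((hc_eq_sq u).trans (by rw [hsq_eq_c u]; ring))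
  have hsum : ∑ i, c i = 1 := by
    have hb'j := congrArg (b' j) hbj
    simp only [map_sum, map_smul, hb', if_pos, smul_eq_mul] at hb'j
    change 1 = ∑ i, c i ^ 2 * c i at hb'j
    rw [hb'j]
    refine sum_congr rfl fun i _ => ?_
    rcases hc01 i with h | h <;> simp [h]
  obtain ⟨u, hu⟩ := exists_eq_single_of_sum_eq_one hc01 hsum
  refine ⟨u, ?_⟩
  rw [hbj, hu]
  simp [Pi.single_apply]

end

section

variable {K ι n : Type*} [Field K] [Fintype n] [DecidableEq n]

theorem dual_apply_eq_sum_apply_single_mul (φ : Dual K (n → K)) (v : n → K) :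
    φ v = ∑ i, φ (Pi.single i 1) * v i := by
  conv_lhs => rw [← univ_sum_single v]
  simp only [map_sum]
  refine sum_congr rfl fun i _ => ?_
  rw [mul_comm, ← smul_eq_mul, ← map_smul, ← Pi.single_smul', smul_eq_mul, mul_one]

theorem dual_apply_mul_mul_eq_sum (f g h : Dual K (n → K)) (v : n → K) :
    f v * g v * h v = ∑ i, ∑ j, ∑ k,
      f (Pi.single i 1) * g (Pi.single j 1) * h (Pi.single k 1) * (v i * v j * v k) := by
  rw [dual_apply_eq_sum_apply_single_mul f, dual_apply_eq_sum_apply_single_mul g,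
    dual_apply_eq_sum_apply_single_mul h, sum_mul_sum]
  simp_rw [sum_mul, mul_sum]
  exact sum_congr rfl fun i _ => sum_congr rfl fun j _ => sum_congr rfl fun k _ => by ring

theorem thirdMoment_pi_eq [Fintype ι] {x y : ι → n → K}
    (hxy : ∀ i j k, ∑ s, x s i * x s j * x s k = ∑ s, y s i * y s j * y s k) :
    thirdMoment K x = thirdMoment K y := by
  funext f g h
  simp only [thirdMoment, dual_apply_mul_mul_eq_sum f g h]
  simp_rw [sum_comm (γ := ι), ← mul_sum, hxy]

end

/-- **The third moment tensor determines the orbit.**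
Let a finite group `G` act linearly on `ℝ^p` via a representation `ρ`, and let
`θ ∈ ℝ^p` be such that the orbit vectors `{ρ(g) θ : g ∈ G}` are linearly
independent.  If `θ'` also has linearly independent orbit vectors and the
symmetric third-order moment tensors `T₃(θ) = (1/|G|) ∑_g (ρ(g) θ)^{⊗3}` agree,
then `θ' = ρ(g) θ` for some `g ∈ G`. -/
theorem third_moment_determines_orbit {G : Type*} [Group G] [Fintype G] {p : ℕ}
    (ρ : G →* (Fin p → ℝ) ≃ₗ[ℝ] (Fin p → ℝ)) (θ θ' : Fin p → ℝ)
    (hθ : LinearIndependent ℝ (fun g : G => ρ g θ))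
    (hθ' : LinearIndependent ℝ (fun g : G => ρ g θ'))
    (hT : ∀ i j k : Fin p,
      (1 / (Fintype.card G : ℝ)) * ∑ g : G, (ρ g θ) i * (ρ g θ) j * (ρ g θ) k =
      (1 / (Fintype.card G : ℝ)) * ∑ g : G, (ρ g θ') i * (ρ g θ') j * (ρ g θ') k) :
    ∃ g : G, ρ g θ = θ' := by
  have hcard : 1 / (Fintype.card G : ℝ) ≠ 0 := by simp [Fintype.card_ne_zero]
  have hmoment := thirdMoment_pi_eq fun i j k => mul_left_cancel₀ hcard (hT i j k)
  obtain ⟨g, hg⟩ := exists_eq_of_thirdMoment_eq hθ hθ' hmoment 1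
  exact ⟨g, by simpa using hg⟩
end
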